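/- Let M be a W*-bundle over a compact Hausdorff space X, Y ⊆ X closed, and M_Y = M/I_Y the restriction with induced conditional expectation E_Y onto C(Y). Then M_Y is itself a W*-bundle over Y: E_Y is tracial and faithful, and the closed unit ball of M_Y is complete in the norm ‖b‖_{2,u} = ‖E_Y(b*b)^{1/2}‖_{C(Y)}. Moreover the quotient map M → M_Y is a morphism of W*-bundles: it restricts to the map C(X) → C(Y) given by restriction of functions and intertwines E and E_Y. -/

import Mathlib

/-- The ideal `I_Y = {a ∈ M : E(a*a)(y) = 0 for all y ∈ Y}`. -/
def resKer {X M : Type*} [TopologicalSpace X] [CompactSpace X] [NormedRing M] [StarRing M]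
    [NormedAlgebra ℂ M] (E : M →ₗ[ℂ] C(X, ℂ)) (Y : Set X) : Set M :=
  {a | ∀ y ∈ Y, E (star a * a) y = 0}

/-- The quotient C*-norm of the image of `a` in the restriction `M_Y = M/I_Y`. -/
noncomputable def resCNorm {X M : Type*} [TopologicalSpace X] [CompactSpace X] [NormedRing M]
    [StarRing M] [NormedAlgebra ℂ M] (E : M →ₗ[ℂ] C(X, ℂ)) (Y : Set X) (a : M) : ℝ :=
  sInf {r : ℝ | ∃ j ∈ resKer E Y, r = ‖a - j‖}

/-- The fibre 2-norm `‖a(x)‖_{2,τ_x} = E(a*a)(x)^{1/2}`. -/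
noncomputable def fibTwoNorm {X M : Type*} [TopologicalSpace X] [CompactSpace X] [NormedRing M]
    [StarRing M] [NormedAlgebra ℂ M] (E : M →ₗ[ℂ] C(X, ℂ)) (x : X) (a : M) : ℝ :=
  Real.sqrt ((E (star a * a) x).re)

/-!
Well-definedness of `E_Y` on `M/I_Y` is Cauchy–Schwarz for the fibre states `E(·)(y)`, and
faithfulness is built into `I_Y`. For the completeness axiom, lift a `‖·‖_{2,u}`-Cauchy sequence of
the unit ball of `M_Y` to the unit ball of `M` up to errors `2⁻ⁿ` and pass to a subsequence `v k`
whose gaps over `Y` are below `2⁻ᵏ`. Then glue recursively: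
`w (k+1) = (1 - g) w k + g v (k+1)`, where the Urysohn function `g` is `1` on `Y` and vanishes
where `v (k+1)` and `w k` are not `2⁻ᵏ`-close. Being a central convex combination, `w (k+1)` stays
in the unit ball; it agrees with `v (k+1)` over `Y`; and its gaps are below `2⁻ᵏ` over all of `X`.
So axiom (C) for `M` yields a limit of `w`, which is also a limit of the original sequence over `Y`.
-/

section FibreSeminorm

variable {X M : Type*} [TopologicalSpace X] [CompactSpace X]
  [NormedRing M] [StarRing M] [NormedAlgebra ℂ M] (E : M →ₗ[ℂ] C(X, ℂ))

/-- The GNS semi-inner product of the fibre state `E(·)(x)`; its seminorm is `fibTwoNorm E x`. -/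
noncomputable abbrev fibreCore [StarModule ℂ M]
    (hpos : ∀ (a : M) (x : X), 0 ≤ (E (star a * a) x).re)
    (hstar : ∀ a : M, E (star a) = star (E a)) (x : X) : PreInnerProductSpace.Core ℂ M where
  inner a b := E (star a * b) x
  conj_inner_symm a b := by
    rw [← star_star (star b * a), star_mul, star_star, hstar, ContinuousMap.star_apply]
    exact Complex.conj_conj _
  re_inner_nonneg a := hpos a x
  add_left a b c := by simp only [star_add, add_mul, map_add, ContinuousMap.add_apply]
  smul_left a b r := by
    simp only [star_smul, smul_mul_assoc, map_smul, ContinuousMap.smul_apply, smul_eq_mul]; rfl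

theorem norm_apply_star_mul_le [StarModule ℂ M]
    (hpos : ∀ (a : M) (x : X), 0 ≤ (E (star a * a) x).re)
    (hstar : ∀ a : M, E (star a) = star (E a)) (x : X) (a b : M) :
    ‖E (star a * b) x‖ ≤ fibTwoNorm E x a * fibTwoNorm E x b :=
  @InnerProductSpace.Core.norm_inner_le_norm ℂ M _ _ _ (fibreCore E hpos hstar x) a b

theorem fibTwoNorm_sub_le [StarModule ℂ M]
    (hpos : ∀ (a : M) (x : X), 0 ≤ (E (star a * a) x).re)
    (hstar : ∀ a : M, E (star a) = star (E a)) (x : X) (a b c : M) :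
    fibTwoNorm E x (a - c) ≤ fibTwoNorm E x (a - b) + fibTwoNorm E x (b - c) :=
  @norm_sub_le_norm_sub_add_norm_sub M
    (InnerProductSpace.Core.toSeminormedAddCommGroup
      (c := fibreCore E hpos hstar x)).toSeminormedAddGroup a b c

theorem fibTwoNorm_sub_comm (x : X) (a b : M) :
    fibTwoNorm E x (a - b) = fibTwoNorm E x (b - a) := by
  rw [fibTwoNorm, fibTwoNorm, ← neg_sub b a, star_neg, neg_mul_neg]

@[simp]
theorem fibTwoNorm_zero (x : X) : fibTwoNorm E x 0 = 0 := by
  simp [fibTwoNorm]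

theorem continuous_fibTwoNorm (c : M) : Continuous fun x => fibTwoNorm E x c := by
  unfold fibTwoNorm; fun_prop

theorem fibTwoNorm_le_norm [CStarRing M] (hcontr : ∀ a : M, ‖E a‖ ≤ ‖a‖) (x : X) (a : M) :
    fibTwoNorm E x a ≤ ‖a‖ := by
  refine (Real.sqrt_le_left (norm_nonneg a)).mpr ?_
  calc (E (star a * a) x).re ≤ ‖E (star a * a)‖ :=
        (Complex.re_le_norm _).trans (ContinuousMap.norm_coe_le_norm _ x)
    _ ≤ ‖star a * a‖ := hcontr _
    _ = ‖a‖ ^ 2 := by rw [CStarRing.norm_star_mul_self, sq]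

theorem fibTwoNorm_le_sqrt_norm (x : X) (c : M) :
    fibTwoNorm E x c ≤ Real.sqrt ‖E (star c * c)‖ :=
  Real.sqrt_le_sqrt <| (Complex.re_le_norm _).trans (ContinuousMap.norm_coe_le_norm _ x)

theorem sqrt_norm_le_of_forall_fibTwoNorm_le
    (hpos : ∀ (a : M) (x : X), 0 ≤ (E (star a * a) x).re ∧ (E (star a * a) x).im = 0)
    {c : M} {δ : ℝ} (hδ : 0 ≤ δ) (hc : ∀ x, fibTwoNorm E x c ≤ δ) :
    Real.sqrt ‖E (star c * c)‖ ≤ δ := by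
  refine (Real.sqrt_le_left hδ).mpr <| (ContinuousMap.norm_le _ (sq_nonneg δ)).mpr fun x => ?_
  have hre : E (star c * c) x = ((E (star c * c) x).re : ℂ) :=
    Complex.ext rfl (by simp [(hpos c x).2])
  rw [hre, Complex.norm_real, Real.norm_of_nonneg (hpos c x).1, ← Real.sq_sqrt (hpos c x).1]
  exact pow_le_pow_left₀ (Real.sqrt_nonneg _) (hc x) 2

theorem fibTwoNorm_eq_zero_of_mem_resKer {Y : Set X} {j : M} (hj : j ∈ resKer E Y) {y : X}
    (hy : y ∈ Y) : fibTwoNorm E y j = 0 := by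
  simp [fibTwoNorm, hj y hy]

/-- Cauchy–Schwarz against `1`. -/
theorem apply_eq_zero_of_mem_resKer [StarModule ℂ M]
    (hpos : ∀ (a : M) (x : X), 0 ≤ (E (star a * a) x).re)
    (hstar : ∀ a : M, E (star a) = star (E a)) {Y : Set X} {j : M} (hj : j ∈ resKer E Y)
    {y : X} (hy : y ∈ Y) : E j y = 0 := by
  have := norm_apply_star_mul_le E hpos hstar y 1 j
  rw [star_one, one_mul, fibTwoNorm_eq_zero_of_mem_resKer E hj hy, mul_zero] at this
  exact norm_le_zero_iff.mp this

theorem fibTwoNorm_central_mul (ι : C(X, ℂ) →⋆ₐ[ℂ] M)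
    (hcentral : ∀ (h : C(X, ℂ)) (a : M), ι h * a = a * ι h)
    (hmodule : ∀ (h : C(X, ℂ)) (a : M), E (ι h * a) = h * E a)
    (h : C(X, ℂ)) (x : X) (c : M) :
    fibTwoNorm E x (ι h * c) = ‖h x‖ * fibTwoNorm E x c := by
  have hmul : star (ι h * c) * (ι h * c) = ι (star h * h) * (star c * c) := by
    rw [star_mul, ← map_star, ← hcentral, mul_assoc, ← mul_assoc (star c), ← hcentral,
      map_mul]
    simp only [mul_assoc]
  have hx : (star h * h) x = ((‖h x‖ ^ 2 : ℝ) : ℂ) := by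
    rw [ContinuousMap.mul_apply, ContinuousMap.star_apply, RCLike.star_def, RCLike.conj_mul]
    norm_cast
  rw [fibTwoNorm, fibTwoNorm, hmul, hmodule, ContinuousMap.mul_apply, hx, Complex.re_ofReal_mul,
    Real.sqrt_mul (by positivity), Real.sqrt_sq (norm_nonneg _)]

end FibreSeminorm

section Restriction

variable {X M : Type*} [TopologicalSpace X] [CompactSpace X]
  [NormedRing M] [StarRing M] [NormedAlgebra ℂ M] (E : M →ₗ[ℂ] C(X, ℂ)) (Y : Set X)

theorem zero_mem_resKer : (0 : M) ∈ resKer E Y := by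
  simp [resKer]

theorem resCNorm_le_norm (a : M) : resCNorm E Y a ≤ ‖a‖ :=
  csInf_le ⟨0, fun _ ⟨_, _, hr⟩ => hr ▸ norm_nonneg _⟩
    ⟨0, zero_mem_resKer E Y, by rw [sub_zero]⟩

theorem exists_mem_resKer_norm_sub_lt {a : M} {r : ℝ} (ha : resCNorm E Y a < r) :
    ∃ j ∈ resKer E Y, ‖a - j‖ < r := by
  have hne : {r : ℝ | ∃ j ∈ resKer E Y, r = ‖a - j‖}.Nonempty :=
    ⟨_, 0, zero_mem_resKer E Y, rfl⟩
  obtain ⟨_, ⟨j, hj, rfl⟩, hjr⟩ := exists_lt_of_csInf_lt hne ha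
  exact ⟨j, hj, hjr⟩

theorem exists_norm_le_one_fibTwoNorm_sub_le [StarModule ℂ M] [CStarRing M]
    (hpos : ∀ (a : M) (x : X), 0 ≤ (E (star a * a) x).re)
    (hstar : ∀ a : M, E (star a) = star (E a)) (hcontr : ∀ a : M, ‖E a‖ ≤ ‖a‖)
    {a : M} (ha : resCNorm E Y a ≤ 1) {ε : ℝ} (hε : 0 < ε) :
    ∃ s : M, ‖s‖ ≤ 1 ∧ ∀ y ∈ Y, fibTwoNorm E y (a - s) ≤ ε := by
  obtain ⟨j, hj, hlt⟩ := exists_mem_resKer_norm_sub_lt E Y (r := 1 + ε) (by linarith)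
  have hε' : 0 < 1 + ε := by linarith
  set t := a - j
  refine ⟨(1 + ε)⁻¹ • t, ?_, fun y hy => ?_⟩
  · rw [norm_smul, Real.norm_of_nonneg (inv_nonneg.mpr hε'.le)]
    exact inv_mul_le_one_of_le₀ hlt.le hε'.le
  · have hts : t - (1 + ε)⁻¹ • t = (ε / (1 + ε)) • t := by
      rw [show ε / (1 + ε) = 1 - (1 + ε)⁻¹ by field_simp; ring, sub_smul, one_smul]
    calc fibTwoNorm E y (a - (1 + ε)⁻¹ • t)
        ≤ fibTwoNorm E y (a - t) + fibTwoNorm E y (t - (1 + ε)⁻¹ • t) :=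
          fibTwoNorm_sub_le E hpos hstar y _ _ _
      _ ≤ 0 + ‖(ε / (1 + ε)) • t‖ := by
          rw [sub_sub_cancel, fibTwoNorm_eq_zero_of_mem_resKer E hj hy, hts]
          exact add_le_add le_rfl (fibTwoNorm_le_norm E hcontr y _)
      _ ≤ ε := by
          rw [zero_add, norm_smul, Real.norm_of_nonneg (by positivity), div_mul_eq_mul_div,
            div_le_iff₀ hε']
          exact mul_le_mul_of_nonneg_left hlt.le hε.le

end Restriction

theorem star_mul_self_mul_nonneg {A : Type*} [Ring A] [StarRing A] [PartialOrder A]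
    [StarOrderedRing A] {s m : A} (hsm : Commute s m) (hm : 0 ≤ m) : 0 ≤ star s * s * m := by
  rw [mul_assoc, hsm.eq, ← mul_assoc]
  exact star_left_conjugate_nonneg hm s

open scoped ComplexOrder in
theorem exists_continuous_complex_zero_one_of_subset_isOpen {X : Type*} [TopologicalSpace X]
    [NormalSpace X] {Y U : Set X} (hY : IsClosed Y) (hU : IsOpen U) (hYU : Y ⊆ U) :
    ∃ g : C(X, ℂ), 0 ≤ g ∧ g ≤ 1 ∧ (∀ x, ‖g x‖ ≤ 1) ∧ (∀ y ∈ Y, g y = 1) ∧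
      ∀ x ∉ U, g x = 0 := by
  obtain ⟨f, hf₀, hf₁, hf⟩ := exists_continuous_zero_one_of_isClosed hU.isClosed_compl hY
    (Set.disjoint_compl_left_iff_subset.mpr hYU)
  refine ⟨⟨fun x => (f x : ℂ), by fun_prop⟩, fun x => ?_, fun x => ?_, fun x => ?_,
    fun y hy => ?_, fun x hx => ?_⟩
  · simpa using (hf x).1
  · simpa using Complex.real_le_real.mpr (hf x).2
  · simpa [abs_of_nonneg (hf x).1] using (hf x).2
  · simpa using hf₁ hy
  · simpa using hf₀ hx

section Gluing

open scoped ComplexOrder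

variable {X M : Type*} [TopologicalSpace X] [CompactSpace X]
  [NormedRing M] [StarRing M] [CStarRing M] [NormedAlgebra ℂ M] [StarModule ℂ M]
  [CompleteSpace M] (ι : C(X, ℂ) →⋆ₐ[ℂ] M)

theorem norm_central_convexComb_le_one (hcentral : ∀ (h : C(X, ℂ)) (a : M), ι h * a = a * ι h)
    {g : C(X, ℂ)} (hg₀ : 0 ≤ g) (hg₁ : g ≤ 1) {a c : M} (ha : ‖a‖ ≤ 1) (hc : ‖c‖ ≤ 1) :
    ‖ι (1 - g) * a + ι g * c‖ ≤ 1 := by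
  let : CStarAlgebra M := {}
  let := CStarAlgebra.spectralOrder M
  have := CStarAlgebra.spectralOrderedRing M
  -- `M` as a `C(X, ℂ)`-algebra through the central `ι`, so that `module` can check `key`
  let : Algebra C(X, ℂ) M := (ι : C(X, ℂ) →+* M).toAlgebra' hcentral
  have smul_def (h : C(X, ℂ)) (m : M) : h • m = ι h * m := Algebra.smul_def h m
  have star_smul' (h : C(X, ℂ)) (m : M) : star (h • m) = star h • star m := by
    rw [smul_def, smul_def, star_mul, ← map_star, hcentral]
  have smul_nonneg' {h : C(X, ℂ)} (hh : 0 ≤ h) {m : M} (hm : 0 ≤ m) : 0 ≤ h • m := by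
    obtain ⟨s, rfl⟩ := CStarAlgebra.nonneg_iff_eq_star_mul_self.mp hh
    rw [smul_def, map_mul, map_star]
    exact star_mul_self_mul_nonneg (hcentral s m) hm
  have star_mul_self_le_one (b : M) (hb : ‖b‖ ≤ 1) : star b * b ≤ 1 := by
    rw [← CStarAlgebra.norm_le_one_iff_of_nonneg _ (star_mul_self_nonneg b),
      CStarRing.norm_star_mul_self]
    nlinarith [norm_nonneg b]
  set u := ι (1 - g) * a + ι g * c
  have key : 1 - star u * u = (1 - g) • (1 - star a * a) + g • (1 - star c * c)
      + (g * (1 - g)) • (star (c - a) * (c - a)) := by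
    simp only [u, ← smul_def, star_add, star_smul', star_sub, star_one,
      (IsSelfAdjoint.of_nonneg hg₀).star_eq, add_mul, mul_add, sub_mul, mul_sub,
      smul_mul_smul_comm]
    module
  have hu : star u * u ≤ 1 := by
    rw [← sub_nonneg, key]
    refine add_nonneg (add_nonneg ?_ ?_) ?_
    · exact smul_nonneg' (sub_nonneg.mpr hg₁) (sub_nonneg.mpr (star_mul_self_le_one a ha))
    · exact smul_nonneg' hg₀ (sub_nonneg.mpr (star_mul_self_le_one c hc))
    · exact smul_nonneg' (mul_nonneg hg₀ (sub_nonneg.mpr hg₁)) (star_mul_self_nonneg _)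
  rw [← CStarAlgebra.norm_le_one_iff_of_nonneg _ (star_mul_self_nonneg u),
    CStarRing.norm_star_mul_self] at hu
  nlinarith [norm_nonneg u]

theorem exists_glue_of_forall_fibTwoNorm_sub_lt [T2Space X] (E : M →ₗ[ℂ] C(X, ℂ))
    (hcentral : ∀ (h : C(X, ℂ)) (a : M), ι h * a = a * ι h)
    (hmodule : ∀ (h : C(X, ℂ)) (a : M), E (ι h * a) = h * E a) {Y : Set X} (hY : IsClosed Y)
    {v w : M} (hv : ‖v‖ ≤ 1) (hw : ‖w‖ ≤ 1) {δ : ℝ} (hδ : 0 ≤ δ)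
    (hvw : ∀ y ∈ Y, fibTwoNorm E y (v - w) < δ) :
    ∃ w' : M, ‖w'‖ ≤ 1 ∧ (∀ y ∈ Y, fibTwoNorm E y (w' - v) = 0) ∧
      ∀ x, fibTwoNorm E x (w' - w) ≤ δ := by
  obtain ⟨g, hg₀, hg₁, hg_norm, hgY, hgU⟩ :=
    exists_continuous_complex_zero_one_of_subset_isOpen hY
      (isOpen_lt (continuous_fibTwoNorm E (v - w)) continuous_const) hvw
  have hsub : ι (1 - g) = 1 - ι g := by rw [map_sub, map_one]
  refine ⟨ι (1 - g) * w + ι g * v, norm_central_convexComb_le_one ι hcentral hg₀ hg₁ hw hv,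
    fun y hy => ?_, fun x => ?_⟩
  · have : ι (1 - g) * w + ι g * v - v = ι (1 - g) * (w - v) := by rw [hsub]; noncomm_ring
    rw [this, fibTwoNorm_central_mul E ι hcentral hmodule]
    simp [hgY y hy]
  · have : ι (1 - g) * w + ι g * v - w = ι g * (v - w) := by rw [hsub]; noncomm_ring
    rw [this, fibTwoNorm_central_mul E ι hcentral hmodule]
    by_cases hx : fibTwoNorm E x (v - w) < δ
    · exact (mul_le_of_le_one_left (Real.sqrt_nonneg _) (hg_norm x)).trans hx.le
    · simpa [hgU x hx] using hδ

end Gluing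

theorem exists_seq_of_forall_exists_succ {α : Type*} (P : ℕ → α → Prop)
    (R : ℕ → α → α → Prop) {x₀ : α} (h₀ : P 0 x₀)
    (step : ∀ k x, P k x → ∃ y, P (k + 1) y ∧ R k x y) :
    ∃ w : ℕ → α, (∀ k, P k (w k)) ∧ ∀ k, R k (w k) (w (k + 1)) := by
  choose f hf using step
  let W : (k : ℕ) → {x // P k x} := fun k =>
    Nat.rec ⟨x₀, h₀⟩ (fun k W => ⟨f k W.1 W.2, (hf k W.1 W.2).1⟩) k
  exact ⟨fun k => (W k).1, fun k => (W k).2, fun k => (hf k _ _).2⟩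

section UniformTwoNorm

variable {X M : Type*} [TopologicalSpace X] [CompactSpace X]
  [NormedRing M] [StarRing M] [NormedAlgebra ℂ M] (E : M →ₗ[ℂ] C(X, ℂ)) (S : Set X)

/-- Cauchy for the uniform 2-norm `‖·‖_{2,u}` of the paper, taken over `S`. -/
def TwoNormCauchyOn (u : ℕ → M) : Prop :=
  ∀ ε > (0 : ℝ), ∃ N, ∀ m ≥ N, ∀ n ≥ N, ∀ y ∈ S, fibTwoNorm E y (u m - u n) < ε

def TwoNormTendstoOn (u : ℕ → M) (b : M) : Prop :=
  ∀ ε > (0 : ℝ), ∃ N, ∀ n ≥ N, ∀ y ∈ S, fibTwoNorm E y (u n - b) < ε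

open Filter Topology in
theorem twoNormTendstoOn_zero_of_le {d : ℕ → M} {ε : ℕ → ℝ} (hε : Tendsto ε atTop (𝓝 0))
    (hd : ∀ n, ∀ y ∈ S, fibTwoNorm E y (d n) ≤ ε n) : TwoNormTendstoOn E S d 0 := by
  intro δ hδ
  obtain ⟨N, hN⟩ := (hε.eventually (gt_mem_nhds hδ)).exists_forall_of_atTop
  exact ⟨N, fun n hn y hy => by simpa using (hd n y hy).trans_lt (hN n hn)⟩

theorem twoNormTendstoOn_of_sqrt_norm {u : ℕ → M} {b : M}
    (hu : ∀ ε > (0 : ℝ), ∃ N, ∀ n ≥ N, Real.sqrt ‖E (star (u n - b) * (u n - b))‖ < ε) :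
    TwoNormTendstoOn E S u b := by
  intro ε hε
  obtain ⟨N, hN⟩ := hu ε hε
  exact ⟨N, fun n hn y _ => (fibTwoNorm_le_sqrt_norm E y _).trans_lt (hN n hn)⟩

theorem TwoNormCauchyOn.exists_sqrt_norm_lt
    (hpos : ∀ (a : M) (x : X), 0 ≤ (E (star a * a) x).re ∧ (E (star a * a) x).im = 0)
    {u : ℕ → M} (hu : TwoNormCauchyOn E Set.univ u) :
    ∀ ε > (0 : ℝ), ∃ N, ∀ m ≥ N, ∀ n ≥ N, Real.sqrt ‖E (star (u m - u n) * (u m - u n))‖ < ε := by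
  intro ε hε
  obtain ⟨N, hN⟩ := hu (ε / 2) (half_pos hε)
  refine ⟨N, fun m hm n hn => ?_⟩
  calc Real.sqrt ‖E (star (u m - u n) * (u m - u n))‖ ≤ ε / 2 :=
        sqrt_norm_le_of_forall_fibTwoNorm_le E hpos (half_pos hε).le
          fun x => (hN m hm n hn x (Set.mem_univ x)).le
    _ < ε := half_lt_self hε

variable [StarModule ℂ M]

theorem TwoNormTendstoOn.of_sub (hpos : ∀ (a : M) (x : X), 0 ≤ (E (star a * a) x).re)
    (hstar : ∀ a : M, E (star a) = star (E a)) {a s : ℕ → M} {b : M}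
    (hs : TwoNormTendstoOn E S s b) (has : TwoNormTendstoOn E S (fun n => a n - s n) 0) :
    TwoNormTendstoOn E S a b := by
  intro ε hε
  obtain ⟨N₁, hN₁⟩ := hs (ε / 2) (half_pos hε)
  obtain ⟨N₂, hN₂⟩ := has (ε / 2) (half_pos hε)
  refine ⟨max N₁ N₂, fun n hn y hy => ?_⟩
  have h₁ := hN₁ n (le_of_max_le_left hn) y hy
  have h₂ := hN₂ n (le_of_max_le_right hn) y hy
  rw [sub_zero] at h₂
  linarith [fibTwoNorm_sub_le E hpos hstar y (a n) (s n) b]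

theorem TwoNormCauchyOn.of_sub (hpos : ∀ (a : M) (x : X), 0 ≤ (E (star a * a) x).re)
    (hstar : ∀ a : M, E (star a) = star (E a)) {a s : ℕ → M}
    (ha : TwoNormCauchyOn E S a) (has : TwoNormTendstoOn E S (fun n => a n - s n) 0) :
    TwoNormCauchyOn E S s := by
  intro ε hε
  obtain ⟨N₁, hN₁⟩ := ha (ε / 3) (by positivity)
  obtain ⟨N₂, hN₂⟩ := has (ε / 3) (by positivity)
  refine ⟨max N₁ N₂, fun m hm n hn y hy => ?_⟩
  have h₁ := hN₁ m (le_of_max_le_left hm) n (le_of_max_le_left hn) y hy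
  have h₂ := hN₂ m (le_of_max_le_right hm) y hy
  have h₃ := hN₂ n (le_of_max_le_right hn) y hy
  rw [sub_zero, fibTwoNorm_sub_comm] at h₂
  rw [sub_zero] at h₃
  linarith [fibTwoNorm_sub_le E hpos hstar y (s m) (a m) (s n),
    fibTwoNorm_sub_le E hpos hstar y (a m) (a n) (s n)]

theorem TwoNormCauchyOn.twoNormTendstoOn_of_subseq
    (hpos : ∀ (a : M) (x : X), 0 ≤ (E (star a * a) x).re)
    (hstar : ∀ a : M, E (star a) = star (E a)) {u : ℕ → M} {φ : ℕ → ℕ} {b : M}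
    (hu : TwoNormCauchyOn E S u) (hφ : StrictMono φ) (hb : TwoNormTendstoOn E S (u ∘ φ) b) :
    TwoNormTendstoOn E S u b := by
  intro ε hε
  obtain ⟨N₁, hN₁⟩ := hu (ε / 2) (half_pos hε)
  obtain ⟨N₂, hN₂⟩ := hb (ε / 2) (half_pos hε)
  set k := max N₁ N₂
  refine ⟨N₁, fun n hn y hy => ?_⟩
  have h₁ := hN₁ n hn (φ k) ((le_max_left _ _).trans (hφ.id_le k)) y hy
  have h₂ : fibTwoNorm E y (u (φ k) - b) < ε / 2 := hN₂ k (le_max_right _ _) y hy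
  linarith [fibTwoNorm_sub_le E hpos hstar y (u n) (u (φ k)) b]

theorem twoNormCauchyOn_of_le_geometric (hpos : ∀ (a : M) (x : X), 0 ≤ (E (star a * a) x).re)
    (hstar : ∀ a : M, E (star a) = star (E a)) {w : ℕ → M}
    (hw : ∀ k, ∀ x ∈ S, fibTwoNorm E x (w (k + 1) - w k) ≤ (1 / 2) ^ k) :
    TwoNormCauchyOn E S w := by
  have telescope : ∀ n j, ∀ x ∈ S,
      fibTwoNorm E x (w (n + j) - w n) ≤ 2 * (1 / 2) ^ n - 2 * (1 / 2) ^ (n + j) := by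
    intro n j x hx
    induction j with
    | zero => simp
    | succ j ih =>
      calc fibTwoNorm E x (w (n + (j + 1)) - w n)
          ≤ fibTwoNorm E x (w (n + j + 1) - w (n + j)) + fibTwoNorm E x (w (n + j) - w n) :=
            fibTwoNorm_sub_le E hpos hstar x _ _ _
        _ ≤ (1 / 2) ^ (n + j) + (2 * (1 / 2) ^ n - 2 * (1 / 2) ^ (n + j)) :=
            add_le_add (hw _ x hx) ih
        _ = 2 * (1 / 2) ^ n - 2 * (1 / 2) ^ (n + (j + 1)) := by ring
  intro ε hε
  obtain ⟨N, hN⟩ := exists_pow_lt_of_lt_one (half_pos hε) (by norm_num : (1 / 2 : ℝ) < 1)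
  refine ⟨N, fun m hm n hn x hx => ?_⟩
  wlog hnm : n ≤ m generalizing m n
  · rw [fibTwoNorm_sub_comm]
    exact this n hn m hm (le_of_not_ge hnm)
  obtain ⟨j, rfl⟩ := Nat.exists_eq_add_of_le hnm
  have : (1 / 2 : ℝ) ^ n ≤ (1 / 2) ^ N := pow_le_pow_of_le_one (by norm_num) (by norm_num) hn
  linarith [telescope n j x hx, pow_pos (by norm_num : (0 : ℝ) < 1 / 2) (n + j)]

end UniformTwoNorm

theorem exists_norm_le_one_twoNormTendstoOn {X M : Type*} [TopologicalSpace X] [CompactSpace X]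
    [T2Space X] [NormedRing M] [StarRing M] [CStarRing M] [NormedAlgebra ℂ M] [StarModule ℂ M]
    [CompleteSpace M] (E : M →ₗ[ℂ] C(X, ℂ))
    (hpos : ∀ (a : M) (x : X), 0 ≤ (E (star a * a) x).re ∧ (E (star a * a) x).im = 0)
    (hstar : ∀ a : M, E (star a) = star (E a)) (ι : C(X, ℂ) →⋆ₐ[ℂ] M)
    (hcentral : ∀ (h : C(X, ℂ)) (a : M), ι h * a = a * ι h)
    (hmodule : ∀ (h : C(X, ℂ)) (a : M), E (ι h * a) = h * E a)
    (hcomp : ∀ u : ℕ → M, (∀ n, ‖u n‖ ≤ 1) →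
      (∀ ε > (0 : ℝ), ∃ N, ∀ m ≥ N, ∀ n ≥ N, Real.sqrt ‖E (star (u m - u n) * (u m - u n))‖ < ε) →
      ∃ b : M, ‖b‖ ≤ 1 ∧
        ∀ ε > (0 : ℝ), ∃ N, ∀ n ≥ N, Real.sqrt ‖E (star (u n - b) * (u n - b))‖ < ε)
    {Y : Set X} (hY : IsClosed Y) {s : ℕ → M} (hs : ∀ n, ‖s n‖ ≤ 1)
    (hcauchy : TwoNormCauchyOn E Y s) : ∃ b : M, ‖b‖ ≤ 1 ∧ TwoNormTendstoOn E Y s b := by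
  have hpos' : ∀ (a : M) (x : X), 0 ≤ (E (star a * a) x).re := fun a x => (hpos a x).1
  obtain ⟨φ, hφ, hgap⟩ : ∃ φ : ℕ → ℕ, StrictMono φ ∧
      ∀ k, ∀ m ≥ φ k, ∀ y ∈ Y, fibTwoNorm E y (s m - s (φ k)) < (1 / 2) ^ k :=
    Filter.extraction_forall_of_eventually' fun k =>
      let ⟨N, hN⟩ := hcauchy ((1 / 2) ^ k) (by positivity)
      ⟨N, fun n hn m hm y hy => hN m (hn.trans hm) n hn y hy⟩
  set v := s ∘ φ
  obtain ⟨w, hw, hw_step⟩ := exists_seq_of_forall_exists_succ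
    (fun k w => ‖w‖ ≤ 1 ∧ ∀ y ∈ Y, fibTwoNorm E y (w - v k) = 0)
    (fun k w w' => ∀ x, fibTwoNorm E x (w' - w) ≤ (1 / 2) ^ k)
    ⟨hs (φ 0), fun y _ => by simp [v]⟩ fun k w ⟨hw, hwv⟩ => by
      have hgap' : ∀ y ∈ Y, fibTwoNorm E y (v (k + 1) - w) < (1 / 2) ^ k := fun y hy =>
        calc fibTwoNorm E y (v (k + 1) - w)
            ≤ fibTwoNorm E y (v (k + 1) - v k) + fibTwoNorm E y (v k - w) :=
              fibTwoNorm_sub_le E hpos' hstar y _ _ _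
          _ < (1 / 2) ^ k := by
              rw [fibTwoNorm_sub_comm E y (v k), hwv y hy, add_zero]
              exact hgap k _ (hφ.monotone k.le_succ) y hy
      obtain ⟨w', hw'_norm, hw'v, hw'w⟩ :=
        exists_glue_of_forall_fibTwoNorm_sub_lt ι E hcentral hmodule hY (hs _) hw
          (by positivity) hgap'
      exact ⟨w', ⟨hw'_norm, hw'v⟩, hw'w⟩
  have hwC : TwoNormCauchyOn E Set.univ w :=
    twoNormCauchyOn_of_le_geometric E _ hpos' hstar fun k x _ => hw_step k x
  obtain ⟨b, hb, hwb⟩ := hcomp w (fun k => (hw k).1) (hwC.exists_sqrt_norm_lt E hpos)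
  have hvw : TwoNormTendstoOn E Y (fun k => v k - w k) 0 :=
    twoNormTendstoOn_zero_of_le E Y tendsto_const_nhds fun k y hy =>
      (fibTwoNorm_sub_comm E y (v k) (w k) ▸ (hw k).2 y hy).le
  have hvb : TwoNormTendstoOn E Y v b :=
    (twoNormTendstoOn_of_sqrt_norm E Y hwb).of_sub E Y hpos' hstar hvw
  exact ⟨b, hb, hcauchy.twoNormTendstoOn_of_subseq E Y hpos' hstar hφ hvb⟩

theorem stmt11_general {X M : Type*} [TopologicalSpace X] [CompactSpace X] [T2Space X]
    [NormedRing M] [StarRing M] [CStarRing M] [NormedAlgebra ℂ M]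
    [StarModule ℂ M] [CompleteSpace M]
    (E : M →ₗ[ℂ] C(X, ℂ))
    (htr : ∀ a b : M, E (a * b) = E (b * a))
    (hpos : ∀ (a : M) (x : X), 0 ≤ (E (star a * a) x).re ∧ (E (star a * a) x).im = 0)
    (hstar : ∀ a : M, E (star a) = star (E a))
    (hcontr : ∀ a : M, ‖E a‖ ≤ ‖a‖)
    (ι : C(X, ℂ) →⋆ₐ[ℂ] M)
    (hcentral : ∀ (h : C(X, ℂ)) (a : M), ι h * a = a * ι h)
    (hEι : ∀ h : C(X, ℂ), E (ι h) = h)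
    (hmodule : ∀ (h : C(X, ℂ)) (a : M), E (ι h * a) = h * E a)
    -- completeness axiom (C) upstairs
    (hcomp : ∀ u : ℕ → M, (∀ n, ‖u n‖ ≤ 1) →
      (∀ ε > (0 : ℝ), ∃ N, ∀ m ≥ N, ∀ n ≥ N, Real.sqrt ‖E (star (u m - u n) * (u m - u n))‖ < ε) →
      ∃ b : M, ‖b‖ ≤ 1 ∧
        ∀ ε > (0 : ℝ), ∃ N, ∀ n ≥ N, Real.sqrt ‖E (star (u n - b) * (u n - b))‖ < ε)
    (Y : Set X) (hY : IsClosed Y) :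
    -- E_Y is well defined on M_Y (intertwining of E and E_Y by the quotient map)
    (∀ a b : M, a - b ∈ resKer E Y → ∀ y ∈ Y, E a y = E b y) ∧
    -- E_Y is tracial
    (∀ a b : M, ∀ y ∈ Y, E (a * b) y = E (b * a) y) ∧
    -- E_Y is faithful: E_Y((a|_Y)* (a|_Y)) = 0 → a|_Y = 0
    (∀ a : M, (∀ y ∈ Y, E (star a * a) y = 0) → a ∈ resKer E Y) ∧
    -- the quotient map restricts to restriction of functions C(X) → C(Y)
    (∀ h : C(X, ℂ), (∀ y ∈ Y, h y = 0) → ι h ∈ resKer E Y) ∧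
    -- axiom (C) for M_Y: the closed unit ball is complete in the uniform 2-norm over Y
    (∀ a : ℕ → M, (∀ n, resCNorm E Y (a n) ≤ 1) →
      (∀ ε > (0 : ℝ), ∃ N, ∀ m ≥ N, ∀ n ≥ N, ∀ y ∈ Y, fibTwoNorm E y (a m - a n) < ε) →
      ∃ b : M, resCNorm E Y b ≤ 1 ∧
        ∀ ε > (0 : ℝ), ∃ N, ∀ n ≥ N, ∀ y ∈ Y, fibTwoNorm E y (a n - b) < ε) := by
  have hpos' : ∀ (a : M) (x : X), 0 ≤ (E (star a * a) x).re := fun a x => (hpos a x).1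
  refine ⟨fun a b hab y hy => ?_, fun a b y _ => by rw [htr], fun a ha => ha,
    fun h hh y hy => ?_, fun a ha hcauchy => ?_⟩
  · have := apply_eq_zero_of_mem_resKer E hpos' hstar hab hy
    rwa [map_sub, ContinuousMap.sub_apply, sub_eq_zero] at this
  · rw [← map_star, ← map_mul, hEι, ContinuousMap.mul_apply, hh y hy, mul_zero]
  · choose s hs has using fun n => exists_norm_le_one_fibTwoNorm_sub_le E Y hpos' hstar hcontr
      (ha n) (pow_pos (by norm_num : (0 : ℝ) < 1 / 2) n)
    have hdiff : TwoNormTendstoOn E Y (fun n => a n - s n) 0 :=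
      twoNormTendstoOn_zero_of_le E Y (tendsto_pow_atTop_nhds_zero_of_lt_one (by norm_num)
        (by norm_num)) has
    obtain ⟨b, hb, hsb⟩ := exists_norm_le_one_twoNormTendstoOn E hpos hstar ι hcentral hmodule
      hcomp hY hs (TwoNormCauchyOn.of_sub E Y hpos' hstar hcauchy hdiff)
    exact ⟨b, (resCNorm_le_norm E Y b).trans hb, hsb.of_sub E Y hpos' hstar hdiff⟩

/-- the restriction `M_Y = M/I_Y` of a W*-bundle to a closed `Y ⊆ X` is a
W*-bundle over `Y`: the induced expectation `E_Y` is well defined, tracial and faithful, the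
closed unit ball of `M_Y` is complete in `‖E_Y(b*b)^{1/2}‖_{C(Y)}`, and the quotient map
`M → M_Y` is a morphism of W*-bundles (it restricts to restriction `C(X) → C(Y)` and
intertwines `E` and `E_Y`). Everything is phrased via representatives in `M`. -/
theorem stmt11 {X M : Type*} [TopologicalSpace X] [CompactSpace X] [T2Space X]
    [NormedRing M] [StarRing M] [CStarRing M] [NormedAlgebra ℂ M]
    [StarModule ℂ M] [CompleteSpace M]
    (E : M →ₗ[ℂ] C(X, ℂ))
    (hE1 : E 1 = 1)
    (htr : ∀ a b : M, E (a * b) = E (b * a))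
    (hpos : ∀ (a : M) (x : X), 0 ≤ (E (star a * a) x).re ∧ (E (star a * a) x).im = 0)
    (hstar : ∀ a : M, E (star a) = star (E a))
    (hfaith : ∀ a : M, E (star a * a) = 0 → a = 0)
    (hcontr : ∀ a : M, ‖E a‖ ≤ ‖a‖)
    (ι : C(X, ℂ) →⋆ₐ[ℂ] M)
    (hcentral : ∀ (h : C(X, ℂ)) (a : M), ι h * a = a * ι h)
    (hEι : ∀ h : C(X, ℂ), E (ι h) = h)
    (hmodule : ∀ (h : C(X, ℂ)) (a : M), E (ι h * a) = h * E a)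
    -- completeness axiom (C) upstairs
    (hcomp : ∀ u : ℕ → M, (∀ n, ‖u n‖ ≤ 1) →
      (∀ ε > (0 : ℝ), ∃ N, ∀ m ≥ N, ∀ n ≥ N, Real.sqrt ‖E (star (u m - u n) * (u m - u n))‖ < ε) →
      ∃ b : M, ‖b‖ ≤ 1 ∧
        ∀ ε > (0 : ℝ), ∃ N, ∀ n ≥ N, Real.sqrt ‖E (star (u n - b) * (u n - b))‖ < ε)
    (Y : Set X) (hY : IsClosed Y) :
    -- E_Y is well defined on M_Y (intertwining of E and E_Y by the quotient map)
    (∀ a b : M, a - b ∈ resKer E Y → ∀ y ∈ Y, E a y = E b y) ∧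
    -- E_Y is tracial
    (∀ a b : M, ∀ y ∈ Y, E (a * b) y = E (b * a) y) ∧
    -- E_Y is faithful: E_Y((a|_Y)* (a|_Y)) = 0 → a|_Y = 0
    (∀ a : M, (∀ y ∈ Y, E (star a * a) y = 0) → a ∈ resKer E Y) ∧
    -- the quotient map restricts to restriction of functions C(X) → C(Y)
    (∀ h : C(X, ℂ), (∀ y ∈ Y, h y = 0) → ι h ∈ resKer E Y) ∧
    -- axiom (C) for M_Y: the closed unit ball is complete in the uniform 2-norm over Y
    (∀ a : ℕ → M, (∀ n, resCNorm E Y (a n) ≤ 1) →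
      (∀ ε > (0 : ℝ), ∃ N, ∀ m ≥ N, ∀ n ≥ N, ∀ y ∈ Y, fibTwoNorm E y (a m - a n) < ε) →
      ∃ b : M, resCNorm E Y b ≤ 1 ∧
        ∀ ε > (0 : ℝ), ∃ N, ∀ n ≥ N, ∀ y ∈ Y, fibTwoNorm E y (a n - b) < ε) :=
  stmt11_general E htr hpos hstar hcontr ι hcentral hEι hmodule hcomp Y hY
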